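/- arXiv:2504.02806 — 2 statements merged into one kernel-verified Lean document; each statement's English description precedes it below -/
import Mathlib

section
/- Let r ≥ 1, let n be a natural number, and write s = n mod r. Then the number of edges of the Turán graph T(n,r) equals ⌊n²(r − 1)/(2r)⌋ if and only if s(r − s) < 2r (equivalently, either s ≤ 2 or r·(s − 2) < s²). -/
/-!
Writing `s = n % r`, Mathlib's exact edge count of `T(n,r)` rearranges to
`2r · e(T(n,r)) + s(r - s) = (r - 1) n²`. Hence `n²(r - 1)/(2r) = e(T(n,r)) + s(r - s)/(2r)`,
whose floor is `e(T(n,r))` exactly when `s(r - s) < 2r`.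
-/

open Finset SimpleGraph

namespace SimpleGraph

theorem two_mul_mul_card_edgeFinset_turanGraph_add (n r : ℕ) :
    2 * r * #(turanGraph n r).edgeFinset + n % r * (r - n % r) = (r - 1) * n ^ 2 := by
  rcases r.eq_zero_or_pos with rfl | hr
  · simp
  obtain ⟨k, rfl⟩ : ∃ k, r = k + 1 := Nat.exists_eq_add_of_le' hr
  rw [card_edgeFinset_turanGraph, Nat.add_sub_cancel, Nat.choose_two_right]
  set s := n % (k + 1)
  set q := n / (k + 1)
  have hn : n = s + (k + 1) * q := (Nat.mod_add_div n (k + 1)).symm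
  have hs : s ≤ k := Nat.lt_succ_iff.mp (Nat.mod_lt n hr)
  obtain ⟨m, hm⟩ := (Nat.even_mul_pred_self (k + 1)).two_dvd
  rw [Nat.add_sub_cancel] at hm
  obtain ⟨t, ht⟩ := (Nat.even_mul_pred_self s).two_dvd
  have ht' : 2 * t + s = s * s := by
    rw [Nat.mul_sub_one] at ht
    have := Nat.le_mul_self s
    omega
  have hdiv : (n ^ 2 - s ^ 2) * k = 2 * (k + 1) * (s * q * k + m * q ^ 2) := by
    have hsq : n ^ 2 - s ^ 2 = (k + 1) * q * (2 * s + (k + 1) * q) := by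
      rw [hn, Nat.sub_eq_of_eq_add]
      ring
    rw [hsq]
    linear_combination (k + 1) * q ^ 2 * hm
  rw [hdiv, Nat.mul_div_cancel_left _ (by positivity), ht, Nat.mul_div_cancel_left _ two_pos]
  zify [hs, Nat.le_succ_of_le hs] at hm ht' hn ⊢
  linear_combination (-(k : ℤ) * (n + s + (k + 1) * q)) * hn + (k + 1 : ℤ) * ht' -
    (k + 1 : ℤ) * q ^ 2 * hm

end SimpleGraph

theorem natCast_eq_floor_mul_add_div_iff {e a b : ℕ} (hb : 0 < b) :
    (e : ℤ) = ⌊((b * e + a : ℕ) : ℚ) / b⌋ ↔ a < b := by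
  have hb' : (0 : ℚ) < b := Nat.cast_pos.mpr hb
  rw [Nat.cast_add, Nat.cast_mul, add_div, mul_div_cancel_left₀ _ hb'.ne', Int.floor_natCast_add,
    left_eq_add, Int.floor_eq_zero_iff, Set.mem_Ico, div_lt_one hb', Nat.cast_lt]
  exact and_iff_right (by positivity)

theorem mul_sub_lt_two_mul_iff {s r : ℕ} (hs : s < r) :
    s * (r - s) < 2 * r ↔ s ≤ 2 ∨ r * (s - 2) < s ^ 2 := by
  rcases Nat.lt_or_ge s 3 with h | h
  · interval_cases s <;> omega
  · zify [hs.le, show 2 ≤ s by omega]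
    constructor
    · intro h'
      right
      linarith
    · rintro (h' | h') <;> [omega; linarith]

theorem turanGraph_attains_floor_iff {n r : ℕ} (hr : 1 ≤ r) :
    (((turanGraph n r).edgeFinset.card : ℤ) =
        ⌊((n : ℚ) ^ 2 * ((r : ℚ) - 1)) / (2 * r)⌋ ↔
      n % r * (r - n % r) < 2 * r) ∧
    (n % r * (r - n % r) < 2 * r ↔
      (n % r ≤ 2 ∨ r * (n % r - 2) < (n % r) ^ 2)) := by
  refine ⟨?_, mul_sub_lt_two_mul_iff (Nat.mod_lt n hr)⟩
  rw [← natCast_eq_floor_mul_add_div_iff (by omega : 0 < 2 * r),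
    two_mul_mul_card_edgeFinset_turanGraph_add n r]
  push_cast [hr]
  ring_nf
end

section
/- Let G be a finite simple graph on n vertices with at least one edge, and suppose G is not isomorphic to the graph Y on 3 vertices consisting of a single edge plus one isolated vertex. If |E(G)| = ⌊(n/2) · Σ_{v ∈ V(G)} (c(v) − 1)/c(v)⌋, where c(v) is the order of the largest clique of G containing v, then G is connected. -/
/-!
The local Turán inequality `∑ deg v ≤ n ∑ (c v - 1) / c v` holds on every vertex set `s`, with
degrees and clique orders taken inside `s`: remove a largest clique `Q` of `s` and induct. A
vertex outside `Q` with `d` neighbours in `Q` lies in a clique of order `d + 1 ≤ c ≤ |Q|`, and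
`2 (c - 1) ≤ |Q| (c - 1) / c + (|Q| - 1)` pays for the edges between `Q` and the rest.

If `G` is disconnected, let `A` be the component of an edge and `B` its complement. The
inequality on `A` and on `B` leaves a slack
`n ∑ (c v - 1) / c v - 2|E| ≥ |B| ∑_{v ∈ A} (c v - 1) / c v ≥ |B|`, and a slack of `2` pushes the
floor above `|E|`. This fails only if `B` is a single isolated vertex. Then a triangle in `A`
gives slack `≥ 2` as well; otherwise `c v = 2` on `A`, the inequality on `A` is Mantel's bound
`4|E| ≤ |A|²`, and the slack is `≥ 2` unless `|A| = 2`, i.e. `G ≅ Y`.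
-/

open Finset SimpleGraph

/-- `cliqueOrderAt G v` is the order of the largest clique of `G` containing `v`
(`1` if `v` is isolated, witnessed by the singleton clique `{v}`). -/
noncomputable def cliqueOrderAt {V : Type*} (G : SimpleGraph V) (v : V) : ℕ :=
  sSup {r : ℕ | ∃ s : Finset V, G.IsNClique r s ∧ v ∈ s}

/-- The paraglider graph `X`: `K₄` on `{0,1,2,3}` minus the edge `{0,1}`,
plus a vertex `4` adjacent exactly to `0` and `1`. -/
def paraglider : SimpleGraph (Fin 5) where
  Adj a b := ((a, b) ∈ ([(0,2),(0,3),(1,2),(1,3),(2,3),(4,0),(4,1)] : List (Fin 5 × Fin 5)))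
    ∨ ((b, a) ∈ ([(0,2),(0,3),(1,2),(1,3),(2,3),(4,0),(4,1)] : List (Fin 5 × Fin 5)))
  symm := ⟨fun _ _ h => Or.symm h⟩
  loopless := ⟨by intro a; fin_cases a <;> decide⟩

instance : DecidableRel paraglider.Adj := fun _ _ =>
  inferInstanceAs (Decidable (_ ∨ _))

/-- The graph `Y`: three vertices with exactly one edge (between `0` and `1`). -/
def graphY : SimpleGraph (Fin 3) where
  Adj a b := (a = 0 ∧ b = 1) ∨ (a = 1 ∧ b = 0)
  symm := ⟨fun _ _ h => Or.symm (by tauto)⟩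
  loopless := ⟨by intro a; fin_cases a <;> decide⟩

instance : DecidableRel graphY.Adj := fun _ _ =>
  inferInstanceAs (Decidable (_ ∨ _))

namespace SimpleGraph

variable {V : Type*} {G : SimpleGraph V} {s t Q : Finset V} {v x y z : V}

variable (G) in
noncomputable def cliqueOrderIn (s : Finset V) (v : V) : ℕ :=
  sSup {r : ℕ | ∃ t ⊆ s, G.IsNClique r t ∧ v ∈ t}

lemma bddAbove_cliqueOrderIn (s : Finset V) (v : V) :
    BddAbove {r : ℕ | ∃ t ⊆ s, G.IsNClique r t ∧ v ∈ t} :=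
  ⟨#s, fun _ ⟨_, hts, ht, _⟩ => ht.card_eq ▸ card_le_card hts⟩

lemma card_le_cliqueOrderIn (hts : t ⊆ s) (ht : G.IsClique (t : Set V)) (hv : v ∈ t) :
    #t ≤ G.cliqueOrderIn s v :=
  le_csSup (bddAbove_cliqueOrderIn s v) ⟨t, hts, ⟨ht, rfl⟩, hv⟩

lemma one_le_cliqueOrderIn (hv : v ∈ s) : 1 ≤ G.cliqueOrderIn s v := by
  simpa using card_le_cliqueOrderIn (singleton_subset_iff.2 hv) (by simp) (mem_singleton_self v)

lemma exists_isNClique_cliqueOrderIn (hv : v ∈ s) :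
    ∃ t ⊆ s, G.IsNClique (G.cliqueOrderIn s v) t ∧ v ∈ t :=
  Nat.sSup_mem (s := {r : ℕ | ∃ t ⊆ s, G.IsNClique r t ∧ v ∈ t})
    ⟨1, {v}, singleton_subset_iff.2 hv, isNClique_singleton.2 rfl, mem_singleton_self v⟩
    (bddAbove_cliqueOrderIn s v)

lemma cliqueOrderIn_mono {s' : Finset V} (hss' : s ⊆ s') (hv : v ∈ s) :
    G.cliqueOrderIn s v ≤ G.cliqueOrderIn s' v := by
  obtain ⟨t, hts, ht, hvt⟩ := exists_isNClique_cliqueOrderIn hv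
  exact ht.card_eq ▸ card_le_cliqueOrderIn (hts.trans hss') ht.isClique hvt

lemma cliqueOrderIn_univ [Fintype V] (v : V) : G.cliqueOrderIn univ v = cliqueOrderAt G v := by
  simp [cliqueOrderIn, cliqueOrderAt]

lemma IsClique.subset_of_forall_adj_mem (ht : G.IsClique (t : Set V)) (hvt : v ∈ t) (hv : v ∈ s)
    (hs : ∀ u ∈ s, ∀ w, G.Adj u w → w ∈ s) : t ⊆ s := by
  intro u hu
  obtain rfl | hne := eq_or_ne v u
  · exact hv
  · exact hs v hv u (ht hvt hu hne)

lemma cliqueOrderIn_eq_cliqueOrderAt [Fintype V] (hs : ∀ u ∈ s, ∀ w, G.Adj u w → w ∈ s)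
    (hv : v ∈ s) : G.cliqueOrderIn s v = cliqueOrderAt G v := by
  rw [← cliqueOrderIn_univ]
  refine le_antisymm (cliqueOrderIn_mono (subset_univ s) hv) ?_
  obtain ⟨t, -, ht, hvt⟩ := exists_isNClique_cliqueOrderIn (mem_univ v)
  exact ht.card_eq ▸ card_le_cliqueOrderIn (ht.isClique.subset_of_forall_adj_mem hvt hv hs)
    ht.isClique hvt

section degreeIn

variable [DecidableRel G.Adj]

variable (G) in
def degreeIn (s : Finset V) (v : V) : ℕ := #{u ∈ s | G.Adj v u}

lemma degreeIn_lt_card (hv : v ∈ s) : G.degreeIn s v < #s :=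
  card_lt_card (filter_ssubset.2 ⟨v, hv, G.loopless.irrefl v⟩)

lemma degreeIn_add_one_le_cliqueOrderIn (hQ : G.IsClique (Q : Set V)) (hQs : Q ⊆ s) (hv : v ∈ s)
    (hvQ : v ∉ Q) : G.degreeIn Q v + 1 ≤ G.cliqueOrderIn s v := by
  classical
  have hclique : G.IsClique (insert v {u ∈ Q | G.Adj v u} : Finset V) := by
    rw [coe_insert]
    exact (hQ.subset (coe_subset.2 (filter_subset _ _))).insert fun u hu _ => (mem_filter.1 hu).2
  have hsub : insert v {u ∈ Q | G.Adj v u} ⊆ s :=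
    insert_subset hv ((filter_subset _ _).trans hQs)
  simpa [degreeIn, card_insert_of_notMem (fun h => hvQ (mem_filter.1 h).1)] using
    card_le_cliqueOrderIn hsub hclique (mem_insert_self _ _)

lemma degreeIn_sdiff_add_degreeIn [DecidableEq V] (hQs : Q ⊆ s) (v : V) :
    G.degreeIn (s \ Q) v + G.degreeIn Q v = G.degreeIn s v := by
  rw [degreeIn, degreeIn, degreeIn, ← card_union_of_disjoint
    (disjoint_filter_filter sdiff_disjoint), ← filter_union, sdiff_union_of_subset hQs]

lemma sum_degreeIn_self_le (s : Finset V) : (∑ v ∈ s, G.degreeIn s v : ℝ) ≤ #s * (#s - 1) :=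
  calc (∑ v ∈ s, G.degreeIn s v : ℝ) ≤ ∑ _v ∈ s, ((#s : ℝ) - 1) :=
        sum_le_sum fun v hv => le_sub_iff_add_le.2 (by exact_mod_cast degreeIn_lt_card hv)
    _ = #s * (#s - 1) := by rw [sum_const, nsmul_eq_mul]

lemma sum_degreeIn_comm (s t : Finset V) :
    ∑ v ∈ s, G.degreeIn t v = ∑ v ∈ t, G.degreeIn s v := by
  simp only [degreeIn, card_filter]
  rw [sum_comm]
  simp only [G.adj_comm]

lemma sum_degreeIn_eq_sdiff [DecidableEq V] (hQs : Q ⊆ s) :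
    ∑ v ∈ s, G.degreeIn s v = ∑ v ∈ s \ Q, G.degreeIn (s \ Q) v
      + 2 * ∑ v ∈ s \ Q, G.degreeIn Q v + ∑ v ∈ Q, G.degreeIn Q v := by
  rw [← sum_sdiff hQs]
  simp only [← degreeIn_sdiff_add_degreeIn hQs, sum_add_distrib]
  rw [sum_degreeIn_comm Q (s \ Q)]
  ring

lemma degreeIn_eq_degree [Fintype V] (hs : ∀ u ∈ s, ∀ w, G.Adj u w → w ∈ s)
    (hv : v ∈ s) : G.degreeIn s v = G.degree v := by
  rw [degreeIn, ← card_neighborFinset_eq_degree, neighborFinset_eq_filter]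
  congr 1
  ext u
  simpa using hs v hv u

end degreeIn

lemma sub_one_div_self_nonneg (c : ℕ) : 0 ≤ ((c : ℝ) - 1) / c := by
  rcases c.eq_zero_or_pos with rfl | hc
  · simp
  · exact div_nonneg (sub_nonneg.2 (by exact_mod_cast hc)) (Nat.cast_nonneg c)

lemma sub_one_div_self_le {a b : ℕ} (ha : 0 < a) (hab : a ≤ b) :
    ((a : ℝ) - 1) / a ≤ ((b : ℝ) - 1) / b := by
  have ha' : (0 : ℝ) < a := by exact_mod_cast ha
  have hab' : (a : ℝ) ≤ b := by exact_mod_cast hab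
  rw [div_le_div_iff₀ ha' (ha'.trans_le hab')]
  nlinarith

lemma two_mul_sub_one_le {c W : ℝ} (hc : 1 ≤ c) (hcW : c ≤ W) :
    2 * (c - 1) ≤ W * ((c - 1) / c) + (W - 1) := by
  have hc0 : 0 < c := by linarith
  have hgap : W * ((c - 1) / c) + (W - 1) - 2 * (c - 1) = (2 * c - 1) * (W - c) / c := by
    field_simp
    ring
  have : 0 ≤ (2 * c - 1) * (W - c) / c :=
    div_nonneg (mul_nonneg (by linarith) (sub_nonneg.2 hcW)) hc0.le
  linarith

section localTuran

variable [DecidableRel G.Adj] [DecidableEq V]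

lemma two_mul_sum_degreeIn_le (hQ : G.IsClique (Q : Set V)) (hQs : Q ⊆ s)
    (hmax : ∀ v ∈ s, G.cliqueOrderIn s v ≤ #Q) :
    2 * (∑ v ∈ s \ Q, G.degreeIn Q v : ℝ) ≤
      #Q * ∑ v ∈ s \ Q, ((G.cliqueOrderIn s v : ℝ) - 1) / G.cliqueOrderIn s v
        + #(s \ Q) * ((#Q : ℝ) - 1) := by
  calc 2 * (∑ v ∈ s \ Q, G.degreeIn Q v : ℝ)
      ≤ ∑ v ∈ s \ Q, ((#Q : ℝ) * (((G.cliqueOrderIn s v : ℝ) - 1) / G.cliqueOrderIn s v)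
          + ((#Q : ℝ) - 1)) := by
        rw [mul_sum]
        refine sum_le_sum fun v hv => ?_
        obtain ⟨hvs, hvQ⟩ := mem_sdiff.1 hv
        have hdeg : (G.degreeIn Q v : ℝ) + 1 ≤ G.cliqueOrderIn s v := by
          exact_mod_cast degreeIn_add_one_le_cliqueOrderIn hQ hQs hvs hvQ
        have := two_mul_sub_one_le (c := G.cliqueOrderIn s v) (W := #Q)
          (by exact_mod_cast one_le_cliqueOrderIn hvs) (by exact_mod_cast hmax v hvs)
        linarith
    _ = _ := by rw [sum_add_distrib, mul_sum, sum_const, nsmul_eq_mul]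

theorem sum_degreeIn_le (s : Finset V) :
    (∑ v ∈ s, G.degreeIn s v : ℝ) ≤
      #s * ∑ v ∈ s, ((G.cliqueOrderIn s v : ℝ) - 1) / G.cliqueOrderIn s v := by
  induction s using Finset.strongInduction with
  | H s ih =>
  rcases s.eq_empty_or_nonempty with rfl | hs
  · simp
  obtain ⟨v₀, hv₀, hmax⟩ := exists_max_image s (G.cliqueOrderIn s) hs
  obtain ⟨Q, hQs, hQ, hv₀Q⟩ := exists_isNClique_cliqueOrderIn hv₀
  set W := G.cliqueOrderIn s v₀
  have hQW : ∀ v ∈ Q, G.cliqueOrderIn s v = W := fun v hv =>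
    le_antisymm (hmax v (hQs hv)) (hQ.card_eq ▸ card_le_cliqueOrderIn hQs hQ.isClique hv)
  set S := ∑ v ∈ s \ Q, ((G.cliqueOrderIn s v : ℝ) - 1) / G.cliqueOrderIn s v
  have hrest : (∑ v ∈ s \ Q, G.degreeIn (s \ Q) v : ℝ) ≤ #(s \ Q) * S :=
    (ih _ (sdiff_ssubset hQs ⟨v₀, hv₀Q⟩)).trans <| mul_le_mul_of_nonneg_left
      (sum_le_sum fun v hv =>
        sub_one_div_self_le (one_le_cliqueOrderIn hv) (cliqueOrderIn_mono sdiff_subset hv))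
      (Nat.cast_nonneg _)
  have hcross := two_mul_sum_degreeIn_le hQ.isClique hQs (hQ.card_eq ▸ hmax)
  rw [hQ.card_eq] at hcross
  have hQQ := sum_degreeIn_self_le (G := G) Q
  rw [hQ.card_eq] at hQQ
  have hQw : ∑ v ∈ Q, ((G.cliqueOrderIn s v : ℝ) - 1) / G.cliqueOrderIn s v = W - 1 := by
    have hW : (W : ℝ) ≠ 0 := (Nat.cast_pos.2 (one_le_cliqueOrderIn hv₀)).ne'
    rw [sum_congr rfl fun v hv => by rw [hQW v hv], sum_const, nsmul_eq_mul, hQ.card_eq]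
    field_simp
  have hcard : (#s : ℝ) = #(s \ Q) + W := by
    rw [← hQ.card_eq, ← Nat.cast_add, card_sdiff_add_card_eq_card hQs]
  calc (∑ v ∈ s, G.degreeIn s v : ℝ)
      = ∑ v ∈ s \ Q, (G.degreeIn (s \ Q) v : ℝ) + 2 * ∑ v ∈ s \ Q, (G.degreeIn Q v : ℝ)
          + ∑ v ∈ Q, (G.degreeIn Q v : ℝ) := by
        exact_mod_cast sum_degreeIn_eq_sdiff hQs
    _ ≤ #(s \ Q) * S + (W * S + #(s \ Q) * (W - 1)) + W * (W - 1) := by gcongr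
    _ = (#(s \ Q) + W) * (S + (W - 1)) := by ring
    _ = _ := by rw [← hcard, ← hQw, sum_sdiff hQs]

end localTuran

lemma Reachable.not_isIsolated (h : G.Reachable x v) (hx : ¬ G.IsIsolated x) :
    ¬ G.IsIsolated v := by
  obtain rfl | hne := eq_or_ne v x
  · exact hx
  · exact (mem_support_iff_not_isIsolated G).1 (mem_support_of_reachable hne h.symm)

section global

variable [Fintype V]

lemma card_le_cliqueOrderAt (ht : G.IsClique (t : Set V)) (hv : v ∈ t) :
    #t ≤ cliqueOrderAt G v :=
  cliqueOrderIn_univ (G := G) v ▸ card_le_cliqueOrderIn (subset_univ t) ht hv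

lemma exists_isNClique_cliqueOrderAt (v : V) :
    ∃ t, G.IsNClique (cliqueOrderAt G v) t ∧ v ∈ t := by
  obtain ⟨t, -, ht, hvt⟩ := exists_isNClique_cliqueOrderIn (G := G) (mem_univ v)
  exact ⟨t, cliqueOrderIn_univ (G := G) v ▸ ht, hvt⟩

lemma cliqueOrderAt_eq_one (hv : G.IsIsolated v) : cliqueOrderAt G v = 1 := by
  obtain ⟨t, ht, hvt⟩ := exists_isNClique_cliqueOrderAt (G := G) v
  have hts : t ⊆ {v} := ht.isClique.subset_of_forall_adj_mem hvt (mem_singleton_self v)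
    fun u hu w huw => (hv w (mem_singleton.1 hu ▸ huw)).elim
  rw [← ht.card_eq]
  exact le_antisymm (by simpa using card_le_card hts) (card_pos.2 ⟨v, hvt⟩)

lemma two_le_cliqueOrderAt (hv : ¬ G.IsIsolated v) : 2 ≤ cliqueOrderAt G v := by
  classical
  obtain ⟨u, hu⟩ := exists_adj_iff_not_isIsolated.2 hv
  simpa [card_pair hu.ne] using card_le_cliqueOrderAt (G := G) (t := {v, u})
    (by simpa [coe_pair, isClique_pair] using fun _ => hu) (mem_insert_self v {u})

lemma card_sub_one_le_sum_cliqueOrderAt (ht : G.IsClique (t : Set V)) (hts : t ⊆ s) :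
    (#t : ℝ) - 1 ≤ ∑ v ∈ s, ((cliqueOrderAt G v : ℝ) - 1) / cliqueOrderAt G v := by
  have hnonneg : ∀ v ∈ s, 0 ≤ ((cliqueOrderAt G v : ℝ) - 1) / cliqueOrderAt G v :=
    fun v _ => sub_one_div_self_nonneg _
  rcases t.eq_empty_or_nonempty with rfl | ht₀
  · simpa using (sum_nonneg hnonneg).trans' (by norm_num)
  calc (#t : ℝ) - 1 = ∑ _v ∈ t, ((#t : ℝ) - 1) / #t := by
        rw [sum_const, nsmul_eq_mul]
        field_simp
    _ ≤ ∑ v ∈ t, ((cliqueOrderAt G v : ℝ) - 1) / cliqueOrderAt G v :=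
        sum_le_sum fun v hv => sub_one_div_self_le (card_pos.2 ht₀) (card_le_cliqueOrderAt ht hv)
    _ ≤ _ := sum_le_sum_of_subset_of_nonneg hts fun v hv _ => hnonneg v hv

lemma nonempty_iso_graphY (hcard : Fintype.card V = 3) (hxy : G.Adj x y) (hz : G.IsIsolated z) :
    Nonempty (G ≃g graphY) := by
  have hxz : x ≠ z := by rintro rfl; exact hz y hxy
  have hyz : y ≠ z := by rintro rfl; exact hz x hxy.symm
  have hxz' : ¬ G.Adj x z := fun h => hz x h.symm
  have hyz' : ¬ G.Adj y z := fun h => hz y h.symm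
  let f : Fin 3 → V := ![x, y, z]
  have hf : Function.Injective f := by
    intro i j h
    fin_cases i <;> fin_cases j <;> simp_all [f, hxy.ne, hxy.ne.symm, hxz.symm, hyz.symm]
  have hbij : Function.Bijective f :=
    (Fintype.bijective_iff_injective_and_card f).2 ⟨hf, by simp [hcard]⟩
  refine ⟨RelIso.symm ⟨Equiv.ofBijective f hbij, fun {i j} => ?_⟩⟩
  fin_cases i <;> fin_cases j <;>
    simp [f, graphY, hxy, hxy.symm, hz x, hz y, hxz', hyz']

variable [DecidableRel G.Adj] [DecidableEq V]

theorem sum_degree_le_of_forall_adj_mem (hs : ∀ u ∈ s, ∀ w, G.Adj u w → w ∈ s) :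
    (∑ v ∈ s, G.degree v : ℝ) ≤
      #s * ∑ v ∈ s, ((cliqueOrderAt G v : ℝ) - 1) / cliqueOrderAt G v := by
  have hdeg : ∀ v ∈ s, (G.degreeIn s v : ℝ) = G.degree v := fun v hv => by
    rw [degreeIn_eq_degree hs hv]
  have hweight : ∀ v ∈ s, ((G.cliqueOrderIn s v : ℝ) - 1) / G.cliqueOrderIn s v =
      ((cliqueOrderAt G v : ℝ) - 1) / cliqueOrderAt G v := fun v hv => by
    rw [cliqueOrderIn_eq_cliqueOrderAt hs hv]
  simpa only [sum_congr rfl hdeg, sum_congr rfl hweight] using sum_degreeIn_le (G := G) s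

lemma two_mul_card_edgeFinset_add_two_le_of_forall_adj_mem
    (hs : ∀ u ∈ s, ∀ w, G.Adj u w → w ∈ s) (hxy : G.Adj x y) (hx : x ∈ s) (hsc : 2 ≤ #sᶜ) :
    2 * (#G.edgeFinset : ℝ) + 2 ≤
      Fintype.card V * ∑ v, ((cliqueOrderAt G v : ℝ) - 1) / cliqueOrderAt G v := by
  have hsc' : ∀ u ∈ sᶜ, ∀ w, G.Adj u w → w ∈ sᶜ := fun u hu w huw =>
    mem_compl.2 fun hw => mem_compl.1 hu (hs w hw u huw.symm)
  have hturan := sum_degree_le_of_forall_adj_mem hs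
  have hturan' := sum_degree_le_of_forall_adj_mem hsc'
  have hedges : 2 * (#G.edgeFinset : ℝ) =
      ∑ v ∈ s, (G.degree v : ℝ) + ∑ v ∈ sᶜ, (G.degree v : ℝ) := by
    rw [sum_add_sum_compl]
    exact_mod_cast G.sum_degrees_eq_twice_card_edges.symm
  have hcard : (Fintype.card V : ℝ) = #s + #sᶜ := by
    exact_mod_cast (card_add_card_compl s).symm
  have hweight : 1 ≤ ∑ v ∈ s, ((cliqueOrderAt G v : ℝ) - 1) / cliqueOrderAt G v := by
    have hpair : ({x, y} : Finset V) ⊆ s :=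
      insert_subset hx (singleton_subset_iff.2 (hs x hx y hxy))
    have := card_sub_one_le_sum_cliqueOrderAt (by simpa [isClique_pair] using fun _ => hxy) hpair
    rw [card_pair hxy.ne] at this
    linarith
  have hweight' : 0 ≤ ∑ v ∈ sᶜ, ((cliqueOrderAt G v : ℝ) - 1) / cliqueOrderAt G v :=
    sum_nonneg fun v _ => sub_one_div_self_nonneg _
  have hsc₂ : (2 : ℝ) ≤ #sᶜ := by exact_mod_cast hsc
  rw [← sum_add_sum_compl s, hcard]
  nlinarith [mul_nonneg (Nat.cast_nonneg (α := ℝ) #s) hweight']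

lemma two_mul_card_edgeFinset_le_of_isIsolated (hz : G.IsIsolated z) :
    2 * (#G.edgeFinset : ℝ) ≤
      (Fintype.card V - 1) * ∑ v, ((cliqueOrderAt G v : ℝ) - 1) / cliqueOrderAt G v := by
  have := sum_degree_le_of_forall_adj_mem (s := univ.erase z) fun u _ w huw =>
    mem_erase.2 ⟨fun hw => hz u (hw ▸ huw.symm), mem_univ w⟩
  rwa [sum_erase _ (by simp [hz.degree_eq_zero]), sum_erase _ (by simp [cliqueOrderAt_eq_one hz]),
    card_erase_of_mem (mem_univ z), card_univ, Nat.cast_sub (Fintype.card_pos_iff.2 ⟨z⟩),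
    Nat.cast_one, ← Nat.cast_sum, sum_degrees_eq_twice_card_edges, Nat.cast_mul,
    Nat.cast_two] at this

lemma two_mul_card_edgeFinset_add_two_le_of_isIsolated (hxy : G.Adj x y) (hz : G.IsIsolated z)
    (hnz : ∀ v ≠ z, ¬ G.IsIsolated v) (hY : ¬ Nonempty (G ≃g graphY)) :
    2 * (#G.edgeFinset : ℝ) + 2 ≤
      Fintype.card V * ∑ v, ((cliqueOrderAt G v : ℝ) - 1) / cliqueOrderAt G v := by
  have hturan := two_mul_card_edgeFinset_le_of_isIsolated hz
  set n := Fintype.card V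
  set f := ∑ v, ((cliqueOrderAt G v : ℝ) - 1) / cliqueOrderAt G v with hf_def
  by_cases htri : ∃ v, 3 ≤ cliqueOrderAt G v
  · obtain ⟨v, hv⟩ := htri
    obtain ⟨t, ht, -⟩ := exists_isNClique_cliqueOrderAt (G := G) v
    have := card_sub_one_le_sum_cliqueOrderAt ht.isClique (subset_univ t)
    rw [ht.card_eq] at this
    have hv' : (3 : ℝ) ≤ cliqueOrderAt G v := by exact_mod_cast hv
    linarith
  push Not at htri
  have hn : 3 ≤ n := by
    have hxz : x ≠ z := by rintro rfl; exact hz y hxy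
    have hyz : y ≠ z := by rintro rfl; exact hz x hxy.symm
    exact card_eq_three.2 ⟨x, y, z, hxy.ne, hxz, hyz, rfl⟩ ▸ card_le_univ _
  have hf : f = (n - 1) / 2 := by
    have hc : ∀ v ∈ univ.erase z, ((cliqueOrderAt G v : ℝ) - 1) / cliqueOrderAt G v = 1 / 2 :=
      fun v hv => by
        rw [le_antisymm (Nat.lt_succ_iff.1 (htri v))
          (two_le_cliqueOrderAt (hnz v (ne_of_mem_erase hv)))]
        norm_num
    rw [hf_def, ← sum_erase_add _ _ (mem_univ z), sum_congr rfl hc, cliqueOrderAt_eq_one hz,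
      sum_const, card_erase_of_mem (mem_univ z), card_univ, nsmul_eq_mul, Nat.cast_sub (by omega)]
    ring
  rw [hf] at hturan ⊢
  obtain h3 | h4 | h5 : n = 3 ∨ n = 4 ∨ 5 ≤ n := by omega
  · exact (hY (nonempty_iso_graphY h3 hxy hz)).elim
  · have hE : #G.edgeFinset ≤ 2 := by
      have : (#G.edgeFinset : ℝ) < 3 := by rw [h4] at hturan; push_cast at hturan; linarith
      exact Nat.lt_succ_iff.1 (by exact_mod_cast this)
    have : (#G.edgeFinset : ℝ) ≤ 2 := by exact_mod_cast hE
    rw [h4]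
    push_cast
    linarith
  · have : (5 : ℝ) ≤ n := by exact_mod_cast h5
    nlinarith

lemma two_mul_card_edgeFinset_add_two_le_of_not_reachable (hxy : G.Adj x y)
    (hz : ¬ G.Reachable x z) (hY : ¬ Nonempty (G ≃g graphY)) :
    2 * (#G.edgeFinset : ℝ) + 2 ≤
      Fintype.card V * ∑ v, ((cliqueOrderAt G v : ℝ) - 1) / cliqueOrderAt G v := by
  set A : Finset V := {v | G.Reachable x v}
  have hA : ∀ u ∈ A, ∀ w, G.Adj u w → w ∈ A := fun u hu w huw => by
    simp only [A, mem_filter, mem_univ, true_and] at hu ⊢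
    exact hu.trans huw.reachable
  have hzA : z ∈ Aᶜ := by simpa [A] using hz
  rcases le_or_gt 2 #Aᶜ with h2 | h1
  · exact two_mul_card_edgeFinset_add_two_le_of_forall_adj_mem hA hxy (by simp [A]) h2
  have hreach : ∀ v ≠ z, G.Reachable x v := fun v hv => by
    by_contra hxv
    exact hv (card_le_one.1 (by omega) v (by simpa [A] using hxv) z hzA)
  refine two_mul_card_edgeFinset_add_two_le_of_isIsolated hxy (fun w hzw => ?_)
    (fun v hv => (hreach v hv).not_isIsolated hxy.not_isIsolated_left) hY
  exact hz ((hreach w hzw.ne.symm).trans hzw.symm.reachable)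

end global

end SimpleGraph

theorem extremal_implies_connected {V : Type*} [Fintype V] [DecidableEq V]
    (G : SimpleGraph V) [DecidableRel G.Adj]
    (hE : G.edgeFinset.Nonempty) (hY : ¬ Nonempty (G ≃g graphY))
    (heq : (G.edgeFinset.card : ℤ) =
      ⌊((Fintype.card V : ℝ) / 2) *
        ∑ v : V, ((cliqueOrderAt G v : ℝ) - 1) / (cliqueOrderAt G v)⌋) :
    G.Connected := by
  by_contra hconn
  obtain ⟨x, y, hxy⟩ := ne_bot_iff_exists_adj.1 (edgeFinset_nonempty.1 hE)
  obtain ⟨z, hz⟩ : ∃ z, ¬ G.Reachable x z := by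
    simp only [connected_iff_exists_forall_reachable, not_exists, not_forall] at hconn
    exact hconn x
  have hbound := two_mul_card_edgeFinset_add_two_le_of_not_reachable hxy hz hY
  have hfloor := (Int.floor_eq_iff.1 heq.symm).2
  push_cast at hfloor
  linarith
end
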